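/- Let n, d ≥ 1, v, w ∈ (ℝ^d)^n, and set μ = d·‖v‖_∞·‖w‖_∞. Let σ_0 ≥ σ_1 ≥ … ≥ σ_{n−1} be the singular values of the matrix A = (exp(v_i·w_j))_{i,j=1}^n. Then σ_0 ≤ n·e^μ, and if μ ≤ 1/2 then for every integer p ≥ 1 with L = C(p+d−1, d) ≤ n−1, one has σ_L ≤ (2n/p!)·μ^p. -/

import Mathlib

open MeasureTheory Complex Matrix
open scoped BigOperators RealInnerProductSpace ENNReal NNReal

noncomputable section

abbrev Vec (d : ℕ) := EuclideanSpace ℝ (Fin d)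
abbrev Conf (n d : ℕ) := Fin n → Vec d

/-- `w·x = Σᵢ ⟪wᵢ, xᵢ⟫`. -/
def dotConf {n d : ℕ} (w x : Conf n d) : ℝ := ∑ i, ⟪w i, x i⟫

/-- Antisymmetrization `(𝒜f)(x) = (1/√(n!)) Σ_π sign(π) f(x∘π)`. -/
def antisym {n d : ℕ} (f : Conf n d → ℂ) : Conf n d → ℂ := fun x =>
  ((Real.sqrt (Nat.factorial n) : ℝ) : ℂ)⁻¹ *
    ∑ π : Equiv.Perm (Fin n), ((Equiv.Perm.sign π : ℤ) : ℂ) * f (fun i => x (π i))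

/-- Product measure `ρₙ = ρ^{⊗n}`. -/
def prodMeasure {d : ℕ} (ρ : Measure (Vec d)) (n : ℕ) : Measure (Conf n d) :=
  Measure.pi fun _ => ρ

/-- `‖f‖_ρ² = ∫ |f|² dρₙ`. -/
def normSq {n d : ℕ} (ρ : Measure (Vec d)) (f : Conf n d → ℂ) : ℝ :=
  ∫ x, ‖f x‖ ^ 2 ∂(prodMeasure ρ n)

/-- `ρ̂(v) = ∫ e^{-i v·x} dρ(x)`. -/
def ftMeasure {d : ℕ} (ρ : Measure (Vec d)) (v : Vec d) : ℂ :=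
  ∫ x, Complex.exp (-(Complex.I * ((⟪v, x⟫ : ℝ) : ℂ))) ∂ρ

/-- Plane wave `e_u(x) = exp(i u·x)`. -/
def planeWave {n d : ℕ} (u : Conf n d) : Conf n d → ℂ := fun x =>
  Complex.exp (Complex.I * ((dotConf u x : ℝ) : ℂ))

/-- `⟨f, g⟩_ρ = ∫ conj(f) g dρₙ`. -/
def innerProd {n d : ℕ} (ρ : Measure (Vec d)) (f g : Conf n d → ℂ) : ℂ :=
  ∫ x, (starRingEnd ℂ) (f x) * g x ∂(prodMeasure ρ n)

/-- Overlap kernel `D_w(θ,θ̃) = det(ρ̂(θwᵢ-θ̃wⱼ))`. -/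
def Dker {n d : ℕ} (ρ : Measure (Vec d)) (w : Conf n d) (θ θ' : ℝ) : ℂ :=
  Matrix.det (Matrix.of fun i j : Fin n => ftMeasure ρ (θ • w i - θ' • w j))

/-- Gaussian overlap kernel `D^N_w(θ,θ̃) = det(exp(-‖θwᵢ-θ̃wⱼ‖²/2))`. -/
def DN {n d : ℕ} (w : Conf n d) (θ θ' : ℝ) : ℝ :=
  Matrix.det (Matrix.of fun i j : Fin n => Real.exp (-‖θ • w i - θ' • w j‖ ^ 2 / 2))

/-- `δ_w = (1/2) min_{i<j} min_{±} ‖wᵢ ± wⱼ‖`. -/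
def sep {n d : ℕ} (w : Conf n d) : ℝ :=
  (1 / 2) * ⨅ p : {p : Fin n × Fin n // p.1 < p.2},
    min ‖w p.1.1 + w p.1.2‖ ‖w p.1.1 - w p.1.2‖

/-- `G_ρ(t) = sup{|ρ̂(y)| : ‖y‖ ≥ t}`. -/
def Gtail {d : ℕ} (ρ : Measure (Vec d)) (t : ℝ) : ℝ :=
  sSup {r | ∃ y : Vec d, t ≤ ‖y‖ ∧ r = ‖ftMeasure ρ y‖}

/-- `‖w‖ = (Σᵢ ‖wᵢ‖²)^{1/2}`. -/
def confNorm {n d : ℕ} (w : Conf n d) : ℝ := Real.sqrt (∑ i, ‖w i‖ ^ 2)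

/-- `‖v‖_∞` : max of the `nd` scalar coordinates' absolute values. -/
def linf {n d : ℕ} (v : Conf n d) : ℝ := ⨆ i : Fin n, ⨆ j : Fin d, |v i j|

/-- Standard Gaussian measure `N(0, I_d)` on `ℝ^d`. -/
def stdGaussian (d : ℕ) : Measure (Vec d) :=
  volume.withDensity fun x =>
    ENNReal.ofReal ((2 * Real.pi) ^ (-(d : ℝ) / 2) * Real.exp (-‖x‖ ^ 2 / 2))

/-!
Cut the exponential series of `A` after degree `p`: the matrix `B` with entries
`∑_{k<p} (vᵢ·wⱼ)^k / k!` has rank at most `L = C(p+d-1, d)`, because `(vᵢ·wⱼ)^k` expands into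
monomials `vᵢ^α wⱼ^α` with `|α| = k`, and there are `C(k+d-1, k)` of them. Each entry of `A - B`
is a Taylor remainder, of size at most `2μ^p/p!` when `μ ≤ 1/2`, so `‖A - B‖ ≤ 2nμ^p/p!`.
Finally `σ_L(A) ≤ ‖A - B‖` whenever `rank B ≤ L`: the span of the top `L + 1` right singular
vectors of `A` meets `ker B`, and on that vector `A` agrees with `A - B`.
The bound on `σ₀` is the case `B = 0`.
-/

open Finset
open scoped InnerProductSpace

lemma Finset.card_piAntidiag_univ {d : Type*} [Fintype d] [DecidableEq d] (k : ℕ) :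
    #(piAntidiag (univ : Finset d) k) = (Fintype.card d).multichoose k := by
  rw [← card_univ, ← card_finsuppAntidiag_nat_eq_multichoose, finsuppAntidiag, card_map,
    card_attach]

lemma Complex.norm_exp_sub_sum_range_le {x : ℂ} {μ : ℝ} (hx : ‖x‖ ≤ μ) (hμ : μ ≤ 1 / 2) (p : ℕ) :
    ‖Complex.exp x - ∑ k ∈ range p, x ^ k / k.factorial‖ ≤ 2 * μ ^ p / p.factorial := by
  have hx' : ‖x‖ / p.succ ≤ 1 / 2 :=
    (div_le_self (norm_nonneg x) (by simp)).trans (hx.trans hμ)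
  calc ‖Complex.exp x - ∑ k ∈ range p, x ^ k / k.factorial‖
      ≤ ‖x‖ ^ p / p.factorial * 2 := Complex.exp_bound' hx'
    _ ≤ μ ^ p / p.factorial * 2 := by gcongr
    _ = 2 * μ ^ p / p.factorial := by ring

namespace Matrix

section Rank

variable {K : Type*} [Field K] {m n : Type*} [Fintype n]

lemma rank_add_le (A B : Matrix m n K) : (A + B).rank ≤ A.rank + B.rank := by
  unfold rank
  rw [mulVecLin_add]
  exact (Submodule.finrank_mono (LinearMap.range_add_le _ _)).trans
    (Submodule.finrank_add_le_finrank_add_finrank _ _)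

lemma rank_sum_le {ι : Type*} (s : Finset ι) (M : ι → Matrix m n K) :
    (∑ i ∈ s, M i).rank ≤ ∑ i ∈ s, (M i).rank :=
  le_sum_of_subadditive (fun A : Matrix m n K => A.rank) rank_zero.le rank_add_le s M

lemma rank_of_mul_dotProduct_pow_le {d : Type*} [Fintype d] (c : K) (a : m → d → K)
    (b : n → d → K) (k : ℕ) :
    (of fun i j => c * (a i ⬝ᵥ b j) ^ k).rank ≤ (Fintype.card d).multichoose k := by
  classical
  let P : Matrix m (piAntidiag (univ : Finset d) k) K :=
    of fun i α => c * Nat.multinomial univ (α : d → ℕ) * ∏ s, a i s ^ (α : d → ℕ) s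
  let Q : Matrix (piAntidiag (univ : Finset d) k) n K :=
    of fun α j => ∏ s, b j s ^ (α : d → ℕ) s
  have hPQ : of (fun i j => c * (a i ⬝ᵥ b j) ^ k) = P * Q := by
    ext i j
    simp only [of_apply, mul_apply, P, Q, dotProduct, sum_pow_eq_sum_piAntidiag, mul_pow,
      prod_mul_distrib, mul_sum]
    rw [← sum_coe_sort]
    exact Fintype.sum_congr _ _ fun α => by ring
  calc (of fun i j => c * (a i ⬝ᵥ b j) ^ k).rank ≤ Q.rank := hPQ ▸ rank_mul_le_right P Q
    _ ≤ Fintype.card (piAntidiag (univ : Finset d) k) := rank_le_card_height Q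
    _ = (Fintype.card d).multichoose k := by rw [Fintype.card_coe, card_piAntidiag_univ]

lemma rank_of_sum_mul_dotProduct_pow_le {d : Type*} [Fintype d] (c : ℕ → K) (a : m → d → K)
    (b : n → d → K) (p : ℕ) :
    (of fun i j => ∑ k ∈ range p, c k * (a i ⬝ᵥ b j) ^ k).rank ≤
      ∑ k ∈ range p, (Fintype.card d).multichoose k := by
  have hsum : of (fun i j => ∑ k ∈ range p, c k * (a i ⬝ᵥ b j) ^ k) =
      ∑ k ∈ range p, of fun i j => c k * (a i ⬝ᵥ b j) ^ k := by
    ext i j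
    simp [sum_apply]
  rw [hsum]
  exact (rank_sum_le _ _).trans (sum_le_sum fun k _ => rank_of_mul_dotProduct_pow_le _ a b k)

end Rank

section Spectrum

variable {𝕜 : Type*} [RCLike 𝕜] {m n : Type*} [Fintype m] [Fintype n] [DecidableEq n]

lemma toEuclideanLin_conjTranspose_mul_self_eigenvectorBasis (A : Matrix m n 𝕜) (i : n) :
    toEuclideanLin (Aᴴ * A) ((isHermitian_conjTranspose_mul_self A).eigenvectorBasis i) =
      ((isHermitian_conjTranspose_mul_self A).eigenvalues i : 𝕜) •
        (isHermitian_conjTranspose_mul_self A).eigenvectorBasis i := by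
  rw [toLpLin_apply, (isHermitian_conjTranspose_mul_self A).mulVec_eigenvectorBasis i,
    ← RCLike.real_smul_eq_coe_smul]
  rfl

lemma norm_toEuclideanLin_sq_eq_sum (A : Matrix m n 𝕜) (x : EuclideanSpace 𝕜 n) :
    ‖toEuclideanLin A x‖ ^ 2 = ∑ i, (isHermitian_conjTranspose_mul_self A).eigenvalues i *
      ‖⟪(isHermitian_conjTranspose_mul_self A).eigenvectorBasis i, x⟫_𝕜‖ ^ 2 := by
  classical
  set hA := isHermitian_conjTranspose_mul_self A
  set b := hA.eigenvectorBasis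
  have hb : ∀ i, ⟪b i, toEuclideanLin (Aᴴ * A) x⟫_𝕜 = hA.eigenvalues i * ⟪b i, x⟫_𝕜 := by
    intro i
    rw [← isSymmetric_toEuclideanLin_iff.mpr hA,
      toEuclideanLin_conjTranspose_mul_self_eigenvectorBasis, inner_smul_left, RCLike.conj_ofReal]
  have hM : (toEuclideanLin A).adjoint ∘ₗ toEuclideanLin A = toEuclideanLin (Aᴴ * A) := by
    rw [toLpLin_mul_same, toEuclideanLin_conjTranspose_eq_adjoint]
  rw [@norm_sq_eq_re_inner 𝕜, ← LinearMap.adjoint_inner_right, ← LinearMap.comp_apply, hM,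
    ← b.sum_inner_mul_inner, map_sum]
  refine Finset.sum_congr rfl fun i _ => ?_
  rw [hb, ← inner_conj_symm, mul_left_comm, RCLike.conj_mul, ← RCLike.ofReal_pow,
    ← RCLike.ofReal_mul, RCLike.ofReal_re]

lemma exists_eigenvalue_conjTranspose_mul_self_le_of_rank_lt (A B : Matrix m n 𝕜) {c : ℝ}
    (hAB : ∀ x, ‖toEuclideanLin (A - B) x‖ ≤ c * ‖x‖) (S : Finset n) (hS : B.rank < #S) :
    ∃ j ∈ S, (isHermitian_conjTranspose_mul_self A).eigenvalues j ≤ c ^ 2 := by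
  classical
  set b := (isHermitian_conjTranspose_mul_self A).eigenvectorBasis with hb
  by_contra! hlt
  set V := Submodule.span 𝕜 (Set.range fun j : S => b j)
  set K := LinearMap.ker (toEuclideanLin B)
  have hV : Module.finrank 𝕜 V = #S := by
    have hli : LinearIndependent 𝕜 fun j : S => b j :=
      b.orthonormal.linearIndependent.comp _ Subtype.val_injective
    rw [finrank_span_eq_card hli, Fintype.card_coe]
  have hK : Module.finrank 𝕜 K + B.rank = Fintype.card n := by
    rw [B.rank_eq_finrank_range_toLin (EuclideanSpace.basisFun m 𝕜).toBasis
      (EuclideanSpace.basisFun n 𝕜).toBasis, add_comm]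
    exact (LinearMap.finrank_range_add_finrank_ker (toEuclideanLin B)).trans finrank_euclideanSpace
  have hVK : ¬ Disjoint V K := fun h => by
    have := Submodule.finrank_add_finrank_le_of_disjoint h
    rw [finrank_euclideanSpace] at this
    omega
  obtain ⟨x, hxV, hxK, hx0⟩ : ∃ x ∈ V, x ∈ K ∧ x ≠ 0 := by
    simpa [Submodule.disjoint_def] using hVK
  have hperp : ∀ i ∉ S, ⟪b i, x⟫_𝕜 = 0 := by
    intro i hi
    refine Submodule.mem_orthogonal_singleton_iff_inner_right.1 ?_
    refine Submodule.span_le.2 ?_ hxV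
    rintro _ ⟨j, rfl⟩
    exact Submodule.mem_orthogonal_singleton_iff_inner_right.2
      (b.orthonormal.2 fun h => hi (h ▸ j.2))
  have hAx : toEuclideanLin A x = toEuclideanLin (A - B) x := by
    rw [map_sub, LinearMap.sub_apply, LinearMap.mem_ker.1 hxK, sub_zero]
  have upper : ‖toEuclideanLin A x‖ ^ 2 ≤ c ^ 2 * ‖x‖ ^ 2 := by
    rw [hAx, ← mul_pow]
    exact pow_le_pow_left₀ (norm_nonneg _) (hAB x) 2
  have lower : c ^ 2 * ‖x‖ ^ 2 < ‖toEuclideanLin A x‖ ^ 2 := by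
    obtain ⟨i, hi⟩ : ∃ i, ⟪b i, x⟫_𝕜 ≠ 0 := by
      by_contra! h
      exact hx0 (by simpa [h] using (b.sum_repr' x).symm)
    have hiS : i ∈ S := by_contra fun h => hi (hperp i h)
    rw [norm_toEuclideanLin_sq_eq_sum, ← hb, ← b.sum_sq_norm_inner_right x, mul_sum]
    refine sum_lt_sum (fun j _ => ?_)
      ⟨i, mem_univ _, mul_lt_mul_of_pos_right (hlt i hiS) (by positivity)⟩
    by_cases hj : j ∈ S
    · exact mul_le_mul_of_nonneg_right (hlt j hj).le (by positivity)
    · simp [hperp j hj]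
  linarith

lemma norm_toEuclideanLin_le_of_norm_entry_le (E : Matrix n n 𝕜) {ε : ℝ} (hε : 0 ≤ ε)
    (hE : ∀ i j, ‖E i j‖ ≤ ε) (x : EuclideanSpace 𝕜 n) :
    ‖toEuclideanLin E x‖ ≤ Fintype.card n * ε * ‖x‖ := by
  have hrow : ∀ i, ‖(toEuclideanLin E x) i‖ ^ 2 ≤ ε ^ 2 * (Fintype.card n * ‖x‖ ^ 2) := by
    intro i
    have hℓ1 : ‖(toEuclideanLin E x) i‖ ≤ ε * ∑ j, ‖x j‖ :=
      calc ‖∑ j, E i j * x j‖ ≤ ∑ j, ‖E i j‖ * ‖x j‖ :=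
            norm_sum_le_of_le _ fun j _ => norm_mul_le _ _
        _ ≤ ∑ j, ε * ‖x j‖ := by gcongr with j; exact hE i j
        _ = ε * ∑ j, ‖x j‖ := (mul_sum _ _ _).symm
    have hCS : (∑ j, ‖x j‖) ^ 2 ≤ Fintype.card n * ‖x‖ ^ 2 := by
      simpa [EuclideanSpace.norm_sq_eq] using
        sq_sum_le_card_mul_sum_sq (s := univ) (f := fun j => ‖x j‖)
    calc ‖(toEuclideanLin E x) i‖ ^ 2 ≤ (ε * ∑ j, ‖x j‖) ^ 2 := by gcongr
      _ ≤ ε ^ 2 * (Fintype.card n * ‖x‖ ^ 2) := by rw [mul_pow]; gcongr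
  refine le_of_pow_le_pow_left₀ two_ne_zero (by positivity) ?_
  calc ‖toEuclideanLin E x‖ ^ 2 = ∑ i, ‖(toEuclideanLin E x) i‖ ^ 2 :=
        EuclideanSpace.norm_sq_eq _
    _ ≤ ∑ _i : n, ε ^ 2 * (Fintype.card n * ‖x‖ ^ 2) := sum_le_sum fun i _ => hrow i
    _ = (Fintype.card n * ε * ‖x‖) ^ 2 := by
      rw [sum_const, card_univ, nsmul_eq_mul]
      ring

end Spectrum

def IsSortedSingularValues {𝕜 : Type*} [RCLike 𝕜] {n : ℕ} (A : Matrix (Fin n) (Fin n) 𝕜)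
    (σ : Fin n → ℝ) : Prop :=
  Antitone σ ∧ ∃ e : Fin n ≃ Fin n, ∀ i,
    σ i = Real.sqrt ((isHermitian_conjTranspose_mul_self A).eigenvalues (e i))

lemma IsSortedSingularValues.le_of_rank_le {𝕜 : Type*} [RCLike 𝕜] {n : ℕ}
    {A B : Matrix (Fin n) (Fin n) 𝕜} {σ : Fin n → ℝ} (hσ : IsSortedSingularValues A σ) {c : ℝ}
    (hc : 0 ≤ c) (hAB : ∀ x, ‖toEuclideanLin (A - B) x‖ ≤ c * ‖x‖) {k : Fin n}
    (hk : B.rank ≤ k) : σ k ≤ c := by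
  obtain ⟨hanti, e, he⟩ := hσ
  obtain ⟨_, hj, hjc⟩ := exists_eigenvalue_conjTranspose_mul_self_le_of_rank_lt A B hAB
    ((Iic k).map e.toEmbedding) (by rw [card_map, Fin.card_Iic]; omega)
  obtain ⟨i, hik, rfl⟩ := mem_map.1 hj
  calc σ k ≤ σ i := hanti (mem_Iic.1 hik)
    _ = √((isHermitian_conjTranspose_mul_self A).eigenvalues (e i)) := he i
    _ ≤ √(c ^ 2) := Real.sqrt_le_sqrt hjc
    _ = c := Real.sqrt_sq hc

lemma IsSortedSingularValues.le_mul_exp_of_norm_dotProduct_le {n : ℕ} {ι : Type*} [Fintype ι]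
    {a b : Fin n → ι → ℂ} {σ : Fin n → ℝ}
    (hσ : IsSortedSingularValues (of fun i j => Complex.exp (a i ⬝ᵥ b j)) σ) {μ : ℝ}
    (hab : ∀ i j, ‖a i ⬝ᵥ b j‖ ≤ μ) (k : Fin n) : σ k ≤ n * Real.exp μ := by
  have hentry : ∀ i j, ‖(of fun i j => Complex.exp (a i ⬝ᵥ b j)) i j‖ ≤ Real.exp μ :=
    fun i j => (Complex.norm_exp_le_exp_norm _).trans (Real.exp_le_exp.2 (hab i j))
  refine hσ.le_of_rank_le (B := 0) (by positivity) (fun x => ?_) (by simp)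
  simpa using norm_toEuclideanLin_le_of_norm_entry_le _ (Real.exp_pos μ).le hentry x

lemma IsSortedSingularValues.le_of_norm_dotProduct_le_of_sum_multichoose_le {n : ℕ} {ι : Type*}
    [Fintype ι] {a b : Fin n → ι → ℂ} {σ : Fin n → ℝ}
    (hσ : IsSortedSingularValues (of fun i j => Complex.exp (a i ⬝ᵥ b j)) σ) {μ : ℝ}
    (hab : ∀ i j, ‖a i ⬝ᵥ b j‖ ≤ μ) (hμ : μ ≤ 1 / 2) (p : ℕ) {k : Fin n}
    (hk : ∑ l ∈ range p, (Fintype.card ι).multichoose l ≤ k) :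
    σ k ≤ 2 * n / p.factorial * μ ^ p := by
  set B : Matrix (Fin n) (Fin n) ℂ :=
    of fun i j => ∑ l ∈ range p, (l.factorial : ℂ)⁻¹ * (a i ⬝ᵥ b j) ^ l
  have hμ0 : 0 ≤ μ := (norm_nonneg _).trans (hab k k)
  have hentry : ∀ i j, ‖((of fun i j => Complex.exp (a i ⬝ᵥ b j)) - B) i j‖ ≤
      2 * μ ^ p / p.factorial := fun i j => by
    simpa only [B, Matrix.sub_apply, of_apply, div_eq_inv_mul] using
      Complex.norm_exp_sub_sum_range_le (hab i j) hμ p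
  refine hσ.le_of_rank_le (B := B) (by positivity) (fun x => ?_)
    ((rank_of_sum_mul_dotProduct_pow_le (fun l => (l.factorial : ℂ)⁻¹) a b p).trans hk)
  convert norm_toEuclideanLin_le_of_norm_entry_le _ (by positivity) hentry x using 1
  simp only [Fintype.card_fin]
  ring

end Matrix

section Configurations

variable {n d : ℕ}

lemma linf_nonneg (v : Conf n d) : 0 ≤ linf v :=
  Real.iSup_nonneg fun _ => Real.iSup_nonneg fun _ => abs_nonneg _

lemma abs_apply_le_linf (v : Conf n d) (i : Fin n) (s : Fin d) : |v i s| ≤ linf v :=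
  (le_ciSup (f := fun s => |v i s|) (Set.finite_range _).bddAbove s).trans
    (le_ciSup (f := fun i => ⨆ s, |v i s|) (Set.finite_range _).bddAbove i)

lemma ofReal_inner_eq_dotProduct (x y : Vec d) :
    ((⟪x, y⟫ : ℝ) : ℂ) = (fun s => (x s : ℂ)) ⬝ᵥ (fun s => (y s : ℂ)) := by
  simp [PiLp.inner_apply, dotProduct, mul_comm]

lemma abs_inner_le_linf_mul_linf (v w : Conf n d) (i j : Fin n) :
    |⟪v i, w j⟫| ≤ d * linf v * linf w :=
  calc |⟪v i, w j⟫| = |∑ s, v i s * w j s| := by simp [PiLp.inner_apply, mul_comm]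
    _ ≤ ∑ s, |v i s| * |w j s| := by
      simpa only [abs_mul] using abs_sum_le_sum_abs (fun s => v i s * w j s) univ
    _ ≤ ∑ _s : Fin d, linf v * linf w := sum_le_sum fun s _ =>
      mul_le_mul (abs_apply_le_linf v i s) (abs_apply_le_linf w j s) (abs_nonneg _)
        (linf_nonneg v)
    _ = d * linf v * linf w := by
      rw [sum_const, card_univ, Fintype.card_fin, nsmul_eq_mul, mul_assoc]

end Configurations

/-- bounds on the decreasingly-ordered singular values of `(e^{vᵢ·wⱼ})`. -/
theorem stmt14 (n d : ℕ) (hn : 1 ≤ n) (v w : Conf n d)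
    (μ : ℝ) (hμ : μ = d * linf v * linf w)
    (A : Matrix (Fin n) (Fin n) ℂ)
    (hA : A = Matrix.of fun i j : Fin n => Complex.exp ((⟪v i, w j⟫ : ℝ)))
    (σ : Fin n → ℝ) (hσanti : Antitone σ)
    (hσ : ∃ e : Fin n ≃ Fin n, ∀ i,
      σ i = Real.sqrt ((Matrix.isHermitian_conjTranspose_mul_self A).eigenvalues (e i))) :
    σ ⟨0, hn⟩ ≤ (n : ℝ) * Real.exp μ ∧
    (μ ≤ 1 / 2 → ∀ p : ℕ, 1 ≤ p → ∀ hL : (p + d - 1).choose d ≤ n - 1,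
      σ ⟨(p + d - 1).choose d, by omega⟩ ≤ (2 * n / (Nat.factorial p : ℝ)) * μ ^ p) := by
  set a : Fin n → Fin d → ℂ := fun i s => (v i s : ℂ)
  set b : Fin n → Fin d → ℂ := fun j s => (w j s : ℂ)
  have hab : ∀ i j, ((⟪v i, w j⟫ : ℝ) : ℂ) = a i ⬝ᵥ b j := fun i j =>
    ofReal_inner_eq_dotProduct (v i) (w j)
  have hz : ∀ i j, ‖a i ⬝ᵥ b j‖ ≤ μ := fun i j => by
    rw [← hab, Complex.norm_real, Real.norm_eq_abs, hμ]
    exact abs_inner_le_linf_mul_linf v w i j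
  have hA' : A = of fun i j => Complex.exp (a i ⬝ᵥ b j) := by simp only [hA, hab]
  have hσA : IsSortedSingularValues (of fun i j => Complex.exp (a i ⬝ᵥ b j)) σ :=
    hA' ▸ ⟨hσanti, hσ⟩
  refine ⟨hσA.le_mul_exp_of_norm_dotProduct_le hz _, fun hμ2 p hp hL => ?_⟩
  refine hσA.le_of_norm_dotProduct_le_of_sum_multichoose_le hz hμ2 p (le_of_eq ?_)
  obtain ⟨q, rfl⟩ := Nat.exists_eq_add_of_le' hp
  rw [Fintype.card_fin, Nat.sum_range_multichoose]
  simp [add_right_comm]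

end
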